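/- Suppose f(x_{(1)},x_{(2)}) = ⟨φ(x_{(1)}),x_{(2)}⟩ + ψ(x_{(1)}) is a Maiorana–McFarland bent function of 2n variables (n ≥ 2), and α₁, α₂, α₃, α₄ ∈ V_n are distinct with α₁+α₂+α₃+α₄ = 0 and β₁+β₂+β₃+β₄ = 0 where βᵢ = φ(αᵢ). Choose γ_{ij} ∈ F_2 for 1 ≤ i,j ≤ 4 such that every row and every column of (γ_{ij}) sums to 1 in F_2. Define qᵢ(y) = f(αᵢ,y) + l_{i1}(y)l_{i2}(y) + l_{i1}(y)l_{i3}(y) + l_{i2}(y)l_{i3}(y) with l_{ij}(y) = ⟨βⱼ,y⟩ + γ_{ij}, and f*(x_{(1)},x_{(2)}) = f(x_{(1)},x_{(2)}) + Σ_{i=1}^4 I_{αᵢ}(x_{(1)}) qᵢ(x_{(2)}), where I_v is the indicator of the point v. Then f* is a bent function of 2n variables. -/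
import Mathlib


open Finset

def ip {n : ℕ} (a b : Fin n → ZMod 2) : ZMod 2 := ∑ i, a i * b i

def wht {n : ℕ} (f : (Fin n → ZMod 2) → ZMod 2) (l : Fin n → ZMod 2) : ℤ :=
  ∑ x : Fin n → ZMod 2, (-1 : ℤ) ^ (f x + ip l x).val


def whtP {m k : ℕ} (f : (Fin m → ZMod 2) × (Fin k → ZMod 2) → ZMod 2)
    (l : (Fin m → ZMod 2) × (Fin k → ZMod 2)) : ℤ :=
  ∑ x : (Fin m → ZMod 2) × (Fin k → ZMod 2),
    (-1 : ℤ) ^ (f x + ip l.1 x.1 + ip l.2 x.2).val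


def fstar {n : ℕ} (φ : (Fin n → ZMod 2) → (Fin n → ZMod 2))
    (ψ : (Fin n → ZMod 2) → ZMod 2) (α : Fin 4 → (Fin n → ZMod 2))
    (γ : Fin 4 → Fin 4 → ZMod 2)
    (p : (Fin n → ZMod 2) × (Fin n → ZMod 2)) : ZMod 2 :=
  ip (φ p.1) p.2 + ψ p.1 +
    ∑ i : Fin 4, (if p.1 = α i then
      (ip (φ (α i)) p.2 + ψ (α i) +
        ((ip (φ (α 0)) p.2 + γ i 0) * (ip (φ (α 1)) p.2 + γ i 1) +
         (ip (φ (α 0)) p.2 + γ i 0) * (ip (φ (α 2)) p.2 + γ i 2) +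
         (ip (φ (α 1)) p.2 + γ i 1) * (ip (φ (α 2)) p.2 + γ i 2)))
      else 0)

def chi (a : ZMod 2) : ℤ := (-1) ^ a.val

lemma chi_add (a b : ZMod 2) : chi (a + b) = chi a * chi b := by revert a b; decide

lemma abs_chi (a : ZMod 2) : |chi a| = 1 := by revert a; decide

lemma chi_one_add (a : ZMod 2) : chi (1 + a) = -chi a := by revert a; decide

lemma chi_sum {ι : Type*} (s : Finset ι) (g : ι → ZMod 2) :
    chi (∑ i ∈ s, g i) = ∏ i ∈ s, chi (g i) := by
  induction s using Finset.cons_induction with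
  | empty => simp [chi]
  | cons a s ha ih => rw [Finset.sum_cons, Finset.prod_cons, chi_add, ih]

lemma char_sum {n : ℕ} (c : Fin n → ZMod 2) :
    ∑ x : Fin n → ZMod 2, chi (ip c x) = if c = 0 then 2 ^ n else 0 := by
  have h1 : ∀ x : Fin n → ZMod 2, chi (ip c x) = ∏ i, chi (c i * x i) :=
    fun x => chi_sum _ _
  have key : ∀ a : ZMod 2, ∑ t : ZMod 2, chi (a * t) = if a = 0 then 2 else 0 := by decide
  simp_rw [h1]
  rw [← Fintype.piFinset_univ, Finset.sum_prod_piFinset Finset.univ (fun i t => chi (c i * t))]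
  simp_rw [key]
  by_cases hc : c = 0
  · subst hc; simp
  · rw [if_neg hc]
    obtain ⟨i, hi⟩ : ∃ i, c i ≠ 0 := by
      by_contra h; push_neg at h; exact hc (funext h)
    exact Finset.prod_eq_zero (Finset.mem_univ i) (by simp [hi])

lemma ip_add_left {n : ℕ} (c d x : Fin n → ZMod 2) :
    ip (c + d) x = ip c x + ip d x := by
  simp [ip, add_mul, Finset.sum_add_distrib]

lemma aff_sum {n : ℕ} (c : Fin n → ZMod 2) (g : ZMod 2) :
    ∑ y : Fin n → ZMod 2, chi (ip c y + g)
      = chi g * (if c = 0 then 2 ^ n else 0) := by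
  have h : ∀ y : Fin n → ZMod 2, chi (ip c y + g) = chi g * chi (ip c y) := by
    intro y; rw [chi_add]; ring
  simp_rw [h]
  rw [← Finset.mul_sum, char_sum]

lemma maj_id (u v w d : ZMod 2) :
    2 * chi (u * v + u * w + v * w + d)
      = chi (u + d) + chi (v + d) + chi (w + d) - chi (u + v + w + d) := by
  revert u v w d; decide

lemma addv_self {n : ℕ} (u : Fin n → ZMod 2) : u + u = 0 := by
  funext k
  have h : ∀ z : ZMod 2, z + z = 0 := by decide
  exact h _

lemma addv_eq_zero {n : ℕ} (u v : Fin n → ZMod 2) : u + v = 0 ↔ u = v := by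
  constructor
  · intro h
    funext k
    have h2 := congrFun h k
    have h3 : ∀ x y : ZMod 2, x + y = 0 → x = y := by decide
    exact h3 _ _ h2
  · intro h; subst h; exact addv_self u

lemma maj_sum {n : ℕ} (b0 b1 b2 b3 bb : Fin n → ZMod 2) (g0 g1 g2 g3 : ZMod 2)
    (hb : b0 + b1 + b2 + b3 = 0) (hg : g0 + g1 + g2 + g3 = 1) :
    2 * ∑ y : Fin n → ZMod 2,
        chi ((ip b0 y + g0) * (ip b1 y + g1) + (ip b0 y + g0) * (ip b2 y + g2) +
             (ip b1 y + g1) * (ip b2 y + g2) + ip bb y)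
      = chi g0 * (if b0 + bb = 0 then 2 ^ n else 0)
        + chi g1 * (if b1 + bb = 0 then 2 ^ n else 0)
        + chi g2 * (if b2 + bb = 0 then 2 ^ n else 0)
        + chi g3 * (if b3 + bb = 0 then 2 ^ n else 0) := by
  have hb3 : b0 + b1 + b2 = b3 := by linear_combination hb - addv_self b3
  have hg3 : g0 + g1 + g2 = 1 + g3 := by
    have h : ∀ a b c d : ZMod 2, a + b + c + d = 1 → a + b + c = 1 + d := by decide
    exact h _ _ _ _ hg
  rw [Finset.mul_sum]
  simp_rw [maj_id]
  rw [Finset.sum_sub_distrib, Finset.sum_add_distrib, Finset.sum_add_distrib]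
  have e0 : ∀ y : Fin n → ZMod 2,
      (ip b0 y + g0) + ip bb y = ip (b0 + bb) y + g0 := by
    intro y; rw [ip_add_left]; ring
  have e1 : ∀ y : Fin n → ZMod 2,
      (ip b1 y + g1) + ip bb y = ip (b1 + bb) y + g1 := by
    intro y; rw [ip_add_left]; ring
  have e2 : ∀ y : Fin n → ZMod 2,
      (ip b2 y + g2) + ip bb y = ip (b2 + bb) y + g2 := by
    intro y; rw [ip_add_left]; ring
  have e3 : ∀ y : Fin n → ZMod 2,
      (ip b0 y + g0) + (ip b1 y + g1) + (ip b2 y + g2) + ip bb y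
        = ip (b3 + bb) y + (1 + g3) := by
    intro y
    rw [ip_add_left, ← hb3, ip_add_left, ip_add_left, ← hg3]
    ring
  simp_rw [e0, e1, e2, e3]
  rw [aff_sum, aff_sum, aff_sum, aff_sum, chi_one_add]
  ring

lemma key4 : ∀ g : Fin 4 → ZMod 2, (∑ i, g i) = 1 →
    (∑ i, chi (g i)) = 2 ∨ (∑ i, chi (g i)) = -2 := by decide


theorem aq4_construction_bent (n : ℕ) (hn : 2 ≤ n)
    (φ : (Fin n → ZMod 2) → (Fin n → ZMod 2)) (hφ : Function.Bijective φ)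
    (ψ : (Fin n → ZMod 2) → ZMod 2)
    (α : Fin 4 → (Fin n → ZMod 2)) (hα : Function.Injective α)
    (hαsum : ∑ i, α i = 0) (hβsum : ∑ i, φ (α i) = 0)
    (γ : Fin 4 → Fin 4 → ZMod 2)
    (hrow : ∀ i, ∑ j, γ i j = 1) (hcol : ∀ j, ∑ i, γ i j = 1) :
    ∀ l : (Fin n → ZMod 2) × (Fin n → ZMod 2),
      |whtP (fstar φ ψ α γ) l| = 2 ^ n := by
  classical
  rintro ⟨a, b⟩
  set β : Fin 4 → (Fin n → ZMod 2) := fun i => φ (α i) with hβdef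
  have hβinj : Function.Injective β := fun i j h => hα (hφ.injective h)
  have cancel2 : ∀ u v : ZMod 2, u + (u + v) = v := by decide
  -- split the double sum
  have hsplit : whtP (fstar φ ψ α γ) (a, b)
      = ∑ x1 : Fin n → ZMod 2, chi (ip a x1) *
          ∑ y : Fin n → ZMod 2, chi (fstar φ ψ α γ (x1, y) + ip b y) := by
    rw [whtP, Fintype.sum_prod_type]
    refine Finset.sum_congr rfl fun x1 _ => ?_
    rw [Finset.mul_sum]
    refine Finset.sum_congr rfl fun y _ => ?_
    show chi _ = chi (ip a x1) * chi _
    rw [← chi_add]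
    congr 1
    ring
  -- value of fstar off the α's
  have hoff : ∀ x1 : Fin n → ZMod 2, (∀ i, x1 ≠ α i) → ∀ y,
      fstar φ ψ α γ (x1, y) = ip (φ x1) y + ψ x1 := by
    intro x1 h y
    unfold fstar
    rw [Finset.sum_eq_zero, add_zero]
    intro i _
    exact if_neg (h i)
  -- value of fstar at α i
  have hon : ∀ (i : Fin 4) (y : Fin n → ZMod 2), fstar φ ψ α γ (α i, y) =
      (ip (β 0) y + γ i 0) * (ip (β 1) y + γ i 1) +
      (ip (β 0) y + γ i 0) * (ip (β 2) y + γ i 2) +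
      (ip (β 1) y + γ i 1) * (ip (β 2) y + γ i 2) := by
    intro i y
    unfold fstar
    simp only [hα.eq_iff]
    rw [Finset.sum_ite_eq]
    simp only [Finset.mem_univ, if_true]
    exact cancel2 _ _
  have hbsum4 : β 0 + β 1 + β 2 + β 3 = 0 := by
    have h := hβsum; rw [Fin.sum_univ_four] at h; exact h
  have hgrow : ∀ i, γ i 0 + γ i 1 + γ i 2 + γ i 3 = 1 := by
    intro i; have h := hrow i; rw [Fin.sum_univ_four] at h; exact h
  -- doubled inner sum at α i
  have hon2 : ∀ i : Fin 4,
      2 * ∑ y : Fin n → ZMod 2, chi (fstar φ ψ α γ (α i, y) + ip b y)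
      = chi (γ i 0) * (if β 0 + b = 0 then 2 ^ n else 0)
        + chi (γ i 1) * (if β 1 + b = 0 then 2 ^ n else 0)
        + chi (γ i 2) * (if β 2 + b = 0 then 2 ^ n else 0)
        + chi (γ i 3) * (if β 3 + b = 0 then 2 ^ n else 0) := by
    intro i
    simp_rw [hon i]
    exact maj_sum _ _ _ _ _ _ _ _ _ hbsum4 (hgrow i)
  -- inner sum off the α's
  have hoff2 : ∀ x1 : Fin n → ZMod 2, (∀ i, x1 ≠ α i) →
      ∑ y : Fin n → ZMod 2, chi (fstar φ ψ α γ (x1, y) + ip b y)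
      = chi (ψ x1) * (if φ x1 + b = 0 then 2 ^ n else 0) := by
    intro x1 h
    have e : ∀ y : Fin n → ZMod 2,
        fstar φ ψ α γ (x1, y) + ip b y = ip (φ x1 + b) y + ψ x1 := by
      intro y; rw [hoff x1 h y, ip_add_left]; ring
    simp_rw [e]
    exact aff_sum _ _
  rw [hsplit]
  rw [← Finset.sum_filter_add_sum_filter_not Finset.univ (fun x1 => ∃ i, x1 = α i)]
  have himg : Finset.univ.filter (fun x1 => ∃ i, x1 = α i)
      = Finset.image α Finset.univ := by
    ext x; simp [eq_comm]
  rw [himg, Finset.sum_image (fun i _ j _ h => hα h)]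
  by_cases hb : ∃ j, b = β j
  · -- b in the image of β
    obtain ⟨j0, hbj⟩ := hb
    -- off part vanishes
    have hoffzero : ∑ x1 ∈ Finset.univ.filter (fun x1 => ¬∃ i, x1 = α i),
        chi (ip a x1) * ∑ y : Fin n → ZMod 2, chi (fstar φ ψ α γ (x1, y) + ip b y) = 0 := by
      refine Finset.sum_eq_zero fun x1 hx1 => ?_
      rw [Finset.mem_filter] at hx1
      have hne : ∀ i, x1 ≠ α i := by
        intro i h; exact hx1.2 ⟨i, h⟩
      rw [hoff2 x1 hne]
      have : ¬(φ x1 + b = 0) := by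
        intro h
        rw [addv_eq_zero] at h
        exact hne j0 (hφ.injective (h.trans hbj))
      rw [if_neg this]
      ring
    rw [hoffzero, add_zero]
    -- compute inner sums at α i
    have hcond : ∀ j : Fin 4, (β j + b = 0) ↔ j = j0 := by
      intro j
      rw [addv_eq_zero, hbj]
      exact ⟨fun h => hβinj h, fun h => by rw [h]⟩
    have hon3 : ∀ i : Fin 4,
        2 * ∑ y : Fin n → ZMod 2, chi (fstar φ ψ α γ (α i, y) + ip b y)
        = chi (γ i j0) * 2 ^ n := by
      intro i
      rw [hon2 i]
      simp only [hcond]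
      fin_cases j0 <;> simp
    -- now 2 * whtP
    set S := ∑ i : Fin 4, chi (ip a (α i)) *
        ∑ y : Fin n → ZMod 2, chi (fstar φ ψ α γ (α i, y) + ip b y) with hS
    have h2S : 2 * S = 2 ^ n * ∑ i : Fin 4, chi (ip a (α i) + γ i j0) := by
      rw [hS, Finset.mul_sum, Finset.mul_sum]
      refine Finset.sum_congr rfl fun i _ => ?_
      rw [chi_add, ← mul_assoc, mul_comm (2:ℤ) (chi (ip a (α i))), mul_assoc, hon3 i]
      ring
    have hipsum : ∑ i : Fin 4, ip a (α i) = 0 := by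
      simp only [ip]
      rw [Finset.sum_comm]
      refine Finset.sum_eq_zero fun k _ => ?_
      rw [← Finset.mul_sum]
      have h0 : ∑ i : Fin 4, α i k = 0 := by
        have h := congrFun hαsum k
        simpa using h
      rw [h0, mul_zero]
    have hg1 : ∑ i : Fin 4, (ip a (α i) + γ i j0) = 1 := by
      rw [Finset.sum_add_distrib, hipsum, hcol j0, zero_add]
    rcases key4 _ hg1 with h | h
    · have h2 : 2 * S = 2 * 2 ^ n := by rw [h2S, h]; ring
      have hSval := mul_left_cancel₀ (two_ne_zero (α := ℤ)) h2
      rw [hSval]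
      rw [abs_of_nonneg (by positivity)]
    · have h2 : 2 * S = 2 * (-(2 ^ n)) := by rw [h2S, h]; ring
      have hSval := mul_left_cancel₀ (two_ne_zero (α := ℤ)) h2
      rw [hSval, abs_neg]
      rw [abs_of_nonneg (by positivity)]
  · -- b not in the image of β
    push_neg at hb
    have honzero : ∀ i : Fin 4,
        ∑ y : Fin n → ZMod 2, chi (fstar φ ψ α γ (α i, y) + ip b y) = 0 := by
      intro i
      have hz : ∀ j : Fin 4, ¬(β j + b = 0) := by
        intro j h
        rw [addv_eq_zero] at h
        exact hb j h.symm
      have h2 : 2 * ∑ y : Fin n → ZMod 2, chi (fstar φ ψ α γ (α i, y) + ip b y)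
          = 2 * 0 := by
        rw [hon2 i, if_neg (hz 0), if_neg (hz 1), if_neg (hz 2), if_neg (hz 3)]
        ring
      exact mul_left_cancel₀ (two_ne_zero (α := ℤ)) h2
    have hfirst : ∑ i : Fin 4, chi (ip a (α i)) *
        ∑ y : Fin n → ZMod 2, chi (fstar φ ψ α γ (α i, y) + ip b y) = 0 := by
      refine Finset.sum_eq_zero fun i _ => ?_
      rw [honzero i, mul_zero]
    rw [hfirst, zero_add]
    obtain ⟨c, hc⟩ := hφ.surjective b
    have hcP : c ∈ Finset.univ.filter (fun x1 => ¬∃ i, x1 = α i) := by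
      rw [Finset.mem_filter]
      refine ⟨Finset.mem_univ _, ?_⟩
      rintro ⟨i, rfl⟩
      exact hb i hc.symm
    have hcne : ∀ i, c ≠ α i := by
      intro i h
      rw [Finset.mem_filter] at hcP
      exact hcP.2 ⟨i, h⟩
    rw [Finset.sum_eq_single_of_mem c hcP]
    · rw [hoff2 c hcne, hc]
      rw [if_pos (addv_self b)]
      rw [← mul_assoc, abs_mul, abs_mul, abs_chi, abs_chi]
      rw [abs_of_nonneg (by positivity : (0:ℤ) ≤ 2 ^ n)]
      ring
    · intro x1 hx1 hx1c
      rw [Finset.mem_filter] at hx1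
      have hne : ∀ i, x1 ≠ α i := fun i h => hx1.2 ⟨i, h⟩
      rw [hoff2 x1 hne]
      have : ¬(φ x1 + b = 0) := by
        intro h
        rw [addv_eq_zero] at h
        exact hx1c (hφ.injective (by rw [h, ← hc]))
      rw [if_neg this]
      ring
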